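/- For the self-similar kernel J(u) = ∫_{[0,1)^d} ∫_{u+[0,1)^d} ‖x−y‖^{−2d} dx dy and for u, v ∈ ℤ^d with u ≠ v and n ∈ ℕ, one has Σ_{a ∈ V_u^n} Σ_{b ∈ V_v^n} J(a−b) = J(u−v), where V_w^n = n·w + {0,…,n−1}^d. -/

import Mathlib

open MeasureTheory
open scoped ENNReal

/-- The half-open unit cube anchored at the lattice point `a`. -/
def latticeCube {d : ℕ} (a : Fin d → ℤ) : Set (EuclideanSpace ℝ (Fin d)) :=
  {x | ∀ i, (a i : ℝ) ≤ x i ∧ x i < (a i : ℝ) + 1}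

/-- The self-similar long-range percolation kernel. -/
noncomputable def Jker (d : ℕ) (a b : Fin d → ℤ) : ℝ≥0∞ :=
  ∫⁻ x in latticeCube a, ∫⁻ y in latticeCube b,
    ENNReal.ofReal (‖x - y‖ ^ (-(2 * (d : ℝ)))) ∂volume ∂volume

/-- The box `V_u^n = n·u + {0,…,n−1}^d` as a finset of lattice points. -/
noncomputable def boxFinset (d n : ℕ) (u : Fin d → ℤ) : Finset (Fin d → ℤ) :=
  Fintype.piFinset fun i => Finset.Ico ((n : ℤ) * u i) ((n : ℤ) * u i + n)

open scoped Pointwise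

lemma measurableSet_latticeCube {d : ℕ} (a : Fin d → ℤ) : MeasurableSet (latticeCube a) := by
  have : latticeCube a =
      ⋂ i, (fun x : EuclideanSpace ℝ (Fin d) => x i) ⁻¹' Set.Ico (a i : ℝ) ((a i : ℝ) + 1) := by
    ext x; simp [latticeCube, Set.mem_Ico]
  rw [this]
  exact MeasurableSet.iInter fun i =>
    measurableSet_preimage
      (show Measurable fun x : EuclideanSpace ℝ (Fin d) => x i from (EuclideanSpace.proj i).continuous.measurable)
      measurableSet_Ico

lemma pairwiseDisjoint_latticeCube {d : ℕ} (s : Set (Fin d → ℤ)) :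
    s.PairwiseDisjoint (latticeCube (d := d)) := by
  intro a _ b _ hab
  refine Set.disjoint_left.2 fun x hxa hxb => hab ?_
  funext i
  have h1 := hxa i; have h2 := hxb i
  have e1 : ⌊x i⌋ = a i := Int.floor_eq_iff.2 ⟨h1.1, h1.2⟩
  have e2 : ⌊x i⌋ = b i := Int.floor_eq_iff.2 ⟨h2.1, h2.2⟩
  rw [← e1, e2]

lemma biUnion_latticeCube {d n : ℕ} (hn : 1 ≤ n) (u : Fin d → ℤ) :
    ⋃ a ∈ boxFinset d n u, latticeCube a = (n : ℝ) • latticeCube u := by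
  have hc : (0:ℝ) < n := by exact_mod_cast hn
  ext x
  simp only [Set.mem_iUnion, Set.mem_smul_set_iff_inv_smul_mem₀ hc.ne']
  constructor
  · rintro ⟨a, ha, hx⟩
    simp only [boxFinset, Fintype.mem_piFinset, Finset.mem_Ico] at ha
    intro i
    have h := hx i; have h2 := ha i
    have hle : ((n:ℝ) * u i) ≤ x i := le_trans (by exact_mod_cast h2.1) h.1
    have hlt : x i < (n:ℝ) * u i + n := by
      have h3 : (a i : ℤ) + 1 ≤ (n:ℤ) * u i + n := h2.2
      have h4 : (a i : ℝ) + 1 ≤ (n:ℝ) * u i + n := by exact_mod_cast h3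
      linarith [h.2]
    have hsm : ((n:ℝ)⁻¹ • x) i = (n:ℝ)⁻¹ * x i := rfl
    rw [hsm]
    constructor
    · rw [le_inv_mul_iff₀ hc]; linarith
    · rw [inv_mul_lt_iff₀ hc]; push_cast; linarith
  · intro hx
    refine ⟨fun i => ⌊x i⌋, ?_, ?_⟩
    · simp only [boxFinset, Fintype.mem_piFinset, Finset.mem_Ico]
      intro i
      have h := hx i
      have hsm : ((n:ℝ)⁻¹ • x) i = (n:ℝ)⁻¹ * x i := rfl
      rw [hsm] at h
      have h1 : (n:ℝ) * u i ≤ x i := by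
        have := h.1; rw [le_inv_mul_iff₀ hc] at this; linarith
      have h2 : x i < (n:ℝ) * u i + n := by
        have := h.2; rw [inv_mul_lt_iff₀ hc] at this; push_cast at this ⊢; linarith
      constructor
      · exact Int.le_floor.2 (by exact_mod_cast h1)
      · exact Int.floor_lt.2 (by exact_mod_cast h2)
    · intro i
      exact ⟨Int.floor_le _, Int.lt_floor_add_one _⟩

lemma smul_set_measurable {d : ℕ} {c : ℝ} (hc : c ≠ 0) {s : Set (EuclideanSpace ℝ (Fin d))}
    (hs : MeasurableSet s) : MeasurableSet (c • s) := by
  have : c • s = (fun x : EuclideanSpace ℝ (Fin d) => c⁻¹ • x) ⁻¹' s := by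
    ext x; simp [Set.mem_smul_set_iff_inv_smul_mem₀ hc]
  rw [this]
  exact measurableSet_preimage (measurable_const_smul _) hs

lemma setLIntegral_smul_set {d : ℕ} {c : ℝ} (hc : 0 < c) {s : Set (EuclideanSpace ℝ (Fin d))}
    (hs : MeasurableSet s) {g : EuclideanSpace ℝ (Fin d) → ℝ≥0∞} (hg : Measurable g) :
    ∫⁻ x in c • s, g x ∂volume
      = ENNReal.ofReal (c ^ d) * ∫⁻ x in s, g (c • x) ∂volume := by
  have hcs : MeasurableSet (c • s) := smul_set_measurable hc.ne' hs
  have hD : Module.finrank ℝ (EuclideanSpace ℝ (Fin d)) = d := finrank_euclideanSpace_fin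
  have hmap : Measure.map (c • ·) (volume : Measure (EuclideanSpace ℝ (Fin d)))
      = ENNReal.ofReal ((c ^ d)⁻¹) • volume := by
    rw [Measure.map_addHaar_smul volume hc.ne', hD, abs_of_pos (by positivity)]
  have hpre : (c • ·) ⁻¹' (c • s) = s := by
    ext x
    exact Set.smul_mem_smul_set_iff₀ hc.ne' s x
  have key := setLIntegral_map (μ := (volume : Measure (EuclideanSpace ℝ (Fin d))))
    hcs hg (measurable_const_smul c)
  rw [hmap, setLIntegral_smul_measure, hpre] at key
  rw [← key, smul_eq_mul, ← mul_assoc, ← ENNReal.ofReal_mul (by positivity),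
    mul_inv_cancel₀ (by positivity : (c:ℝ) ^ d ≠ 0), ENNReal.ofReal_one, one_mul]

/-- Self-similarity of the kernel:
`Σ_{a ∈ V_u^n} Σ_{b ∈ V_v^n} J(a−b) = J(u−v)` for `u ≠ v`. -/
theorem Jker_self_similar (d n : ℕ) (hd : 1 ≤ d) (hn : 1 ≤ n)
    (u v : Fin d → ℤ) (huv : u ≠ v) :
    ∑ a ∈ boxFinset d n u, ∑ b ∈ boxFinset d n v, Jker d a b = Jker d u v := by
  classical
  set c : ℝ := (n : ℝ) with hc_def
  have hc : (0:ℝ) < c := by rw [hc_def]; exact_mod_cast hn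
  set f : EuclideanSpace ℝ (Fin d) → ℝ≥0∞ :=
    fun z => ENNReal.ofReal (‖z‖ ^ (-(2 * (d : ℝ)))) with hf_def
  have hf : Measurable f := by
    have heq : f = fun z => if ‖z‖ = 0 then ENNReal.ofReal (if -(2 * (d : ℝ)) = 0 then 1 else 0)
        else ENNReal.ofReal (Real.exp (Real.log ‖z‖ * (-(2 * (d : ℝ))))) := by
      funext z
      by_cases hz : ‖z‖ = 0
      · rw [hf_def]; simp only [hz, if_true]
        by_cases hp : -(2 * (d : ℝ)) = 0 <;>
          simp [hp, Real.zero_rpow, Real.rpow_zero]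
      · have hz' : 0 < ‖z‖ := lt_of_le_of_ne (norm_nonneg z) (Ne.symm hz)
        rw [hf_def]; simp only [hz, if_false, Real.rpow_def_of_pos hz']
    rw [heq]
    exact Measurable.ite (measurableSet_preimage measurable_norm (measurableSet_singleton 0))
      measurable_const
      ((Real.measurable_exp.comp
        ((Real.measurable_log.comp measurable_norm).mul measurable_const)).ennreal_ofReal)
  have hF : Measurable fun p : EuclideanSpace ℝ (Fin d) × EuclideanSpace ℝ (Fin d) =>
      f (p.1 - p.2) := hf.comp (measurable_fst.sub measurable_snd)
  -- measurability of the partial integral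
  have hG : ∀ t : Set (EuclideanSpace ℝ (Fin d)), MeasurableSet t →
      Measurable fun x => ∫⁻ y in t, f (x - y) ∂volume := by
    intro t ht
    have heq : (fun x => ∫⁻ y in t, f (x - y) ∂volume)
        = fun x => ∫⁻ y, t.indicator (fun y => f (x - y)) y ∂volume := by
      funext x; rw [lintegral_indicator ht]
    rw [heq]
    apply Measurable.lintegral_prod_right (f := fun x y => t.indicator (fun y => f (x - y)) y)
    have : (Function.uncurry fun x y => t.indicator (fun y => f (x - y)) y)
        = (Prod.snd ⁻¹' t).indicator
            (fun p : EuclideanSpace ℝ (Fin d) × EuclideanSpace ℝ (Fin d) => f (p.1 - p.2)) := by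
      funext p
      by_cases hp : p.2 ∈ t <;>
        simp [Function.uncurry, Set.indicator, hp]
    rw [this]
    exact hF.indicator (measurable_snd ht)
  -- Step 1: collapse the double sum of integrals into integrals over big cubes
  have step1 : ∀ a : Fin d → ℤ, ∑ b ∈ boxFinset d n v, Jker d a b
      = ∫⁻ x in latticeCube a, ∫⁻ y in c • latticeCube v, f (x - y) ∂volume ∂volume := by
    intro a
    rw [← biUnion_latticeCube hn v]
    show ∑ b ∈ boxFinset d n v,
        ∫⁻ x in latticeCube a, ∫⁻ y in latticeCube b, f (x - y) ∂volume ∂volume = _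
    rw [← lintegral_finset_sum _ (fun b _ => hG _ (measurableSet_latticeCube b))]
    refine lintegral_congr fun x => ?_
    exact (lintegral_biUnion_finset
      (pairwiseDisjoint_latticeCube _) (fun b _ => measurableSet_latticeCube b) _).symm
  have step2 : ∑ a ∈ boxFinset d n u, ∑ b ∈ boxFinset d n v, Jker d a b
      = ∫⁻ x in c • latticeCube u, ∫⁻ y in c • latticeCube v, f (x - y) ∂volume ∂volume := by
    rw [← biUnion_latticeCube hn u,
      lintegral_biUnion_finset (pairwiseDisjoint_latticeCube _)
        (fun a _ => measurableSet_latticeCube a)]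
    exact Finset.sum_congr rfl fun a _ => step1 a
  -- scaling of the kernel
  have hfscale : ∀ z : EuclideanSpace ℝ (Fin d),
      f (c • z) = ENNReal.ofReal (c ^ (-(2 * (d : ℝ)))) * f z := by
    intro z
    have hnorm : ‖c • z‖ = c * ‖z‖ := by
      rw [norm_smul, Real.norm_eq_abs, abs_of_pos hc]
    simp only [hf_def, hnorm,
      Real.mul_rpow hc.le (norm_nonneg z),
      ENNReal.ofReal_mul (Real.rpow_nonneg hc.le _)]
  have hsv : MeasurableSet ((c : ℝ) • latticeCube v) :=
    smul_set_measurable hc.ne' (measurableSet_latticeCube v)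
  -- apply scaling twice
  rw [step2, setLIntegral_smul_set hc (measurableSet_latticeCube u) (hG _ hsv)]
  have inner_eq : ∀ x : EuclideanSpace ℝ (Fin d),
      ∫⁻ y in c • latticeCube v, f (c • x - y) ∂volume
        = ENNReal.ofReal (c ^ d) * (ENNReal.ofReal (c ^ (-(2 * (d : ℝ)))) *
            ∫⁻ y in latticeCube v, f (x - y) ∂volume) := by
    intro x
    rw [setLIntegral_smul_set (g := fun y => f (c • x - y)) hc (measurableSet_latticeCube v)
      (hf.comp (measurable_const.sub measurable_id))]
    congr 1
    have : ∀ y : EuclideanSpace ℝ (Fin d),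
        f (c • x - c • y) = ENNReal.ofReal (c ^ (-(2 * (d : ℝ)))) * f (x - y) := by
      intro y; rw [← smul_sub, hfscale]
    simp only [this]
    exact lintegral_const_mul' _ _ ENNReal.ofReal_ne_top
  simp only [inner_eq]
  rw [lintegral_const_mul' _ _ ENNReal.ofReal_ne_top,
    lintegral_const_mul' _ _ ENNReal.ofReal_ne_top]
  have hconst : ENNReal.ofReal (c ^ d) * (ENNReal.ofReal (c ^ d) *
      ENNReal.ofReal (c ^ (-(2 * (d : ℝ))))) = 1 := by
    rw [← ENNReal.ofReal_mul (by positivity), ← ENNReal.ofReal_mul (by positivity)]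
    have : (c : ℝ) ^ d * (c ^ d * c ^ (-(2 * (d : ℝ)))) = 1 := by
      rw [← Real.rpow_natCast c d, ← Real.rpow_add hc, ← Real.rpow_add hc]
      rw [show (d : ℝ) + ((d : ℝ) + -(2 * (d : ℝ))) = 0 by ring, Real.rpow_zero]
    rw [this, ENNReal.ofReal_one]
  set I := ∫⁻ x in latticeCube u, ∫⁻ y in latticeCube v, f (x - y) ∂volume ∂volume with hI
  have hring : ENNReal.ofReal (c ^ d) * (ENNReal.ofReal (c ^ d) *
      (ENNReal.ofReal (c ^ (-(2 * (d : ℝ)))) * I))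
      = (ENNReal.ofReal (c ^ d) * (ENNReal.ofReal (c ^ d) *
          ENNReal.ofReal (c ^ (-(2 * (d : ℝ)))))) * I := by ring
  rw [hring, hconst, one_mul]
  rfl
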